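/- arXiv:2412.15368 — 2 statements merged into one kernel-verified Lean document; each statement's English description precedes it below -/
import Mathlib

section
/- For every n ≥ 2: if L_n = V_1·L_{n-1} and I^n ∩ J = I·(I^{n-1} ∩ J), then L̄_n = V̄_1·L̄_{n-1}. Equivalently, if E(I)_n = 0 and the n-th Artin-Rees module E(J,A;I)_n = (I^n ∩ J)/I·(I^{n-1} ∩ J) vanishes, then E(I;A/J)_n = 0; consequently rt(I;A/J) ≤ max(rt(I), s(J,A;I)) and st(I;A/J) ≤ st(I) + m(J,A;I) − 1. -/
/-- The `A`-submodule of homogeneous elements of degree `n` in the kernel `L` of the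
presentation `φ : A[X_1,…,X_r] → A[t]`, `X_i ↦ x_i t`, of the Rees algebra of the ideal
`I = (x_1,…,x_r)`; i.e. the degree-`n` equations `L_n` of the Rees algebra. -/
noncomputable def reesRel {A : Type*} [CommRing A] {r : ℕ} (x : Fin r → A) (n : ℕ) :
    Submodule A (MvPolynomial (Fin r) A) :=
  (RingHom.ker (MvPolynomial.aeval (fun i => Polynomial.C (x i) * Polynomial.X) :
      MvPolynomial (Fin r) A →ₐ[A] Polynomial A)).restrictScalars A
  ⊓ MvPolynomial.homogeneousSubmodule (Fin r) A n

/-- `E(I)_n = 0`, i.e. `L_n = V_1·L_{n-1}`: the degree-`n` equations of the Rees algebra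
are generated by those of degree `n-1`. -/
def reesRelStable {A : Type*} [CommRing A] {r : ℕ} (x : Fin r → A) (n : ℕ) : Prop :=
  reesRel x n = MvPolynomial.homogeneousSubmodule (Fin r) A 1 * reesRel x (n - 1)

/-- The set `SD(I) = {1} ∪ {n ≥ 2 : L_n ≠ V_1·L_{n-1}}` of sifted degrees. -/
def siftedDegrees {A : Type*} [CommRing A] {r : ℕ} (x : Fin r → A) : Set ℕ :=
  {1} ∪ {n : ℕ | 2 ≤ n ∧ ¬ reesRelStable x n}

/-- The sifted type `st(I) = card SD(I)`. -/
noncomputable def siftedType {A : Type*} [CommRing A] {r : ℕ} (x : Fin r → A) : ℕ :=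
  (siftedDegrees x).ncard

/-- The relation type `rt(I)`: the least `s ≥ 1` with `L_n = V_1·L_{n-1}` for all
`n ≥ s+1`. -/
noncomputable def relType {A : Type*} [CommRing A] {r : ℕ} (x : Fin r → A) : ℕ :=
  sInf {s : ℕ | 1 ≤ s ∧ ∀ n, s + 1 ≤ n → reesRelStable x n}

/-- The strong Artin-Rees number `s(J,A;I)`: the least `s ≥ 1` with
`I^n ∩ J = I·(I^{n-1} ∩ J)` for all `n ≥ s+1`. -/
noncomputable def strongAR {A : Type*} [CommRing A] (I J : Ideal A) : ℕ :=
  sInf {s : ℕ | 1 ≤ s ∧ ∀ n, s + 1 ≤ n → I ^ n ⊓ J = I * (I ^ (n - 1) ⊓ J)}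

/-- The medium Artin-Rees number `m(J,A;I) = 1 + card{n ≥ 2 : E(J,A;I)_n ≠ 0}`. -/
noncomputable def mediumAR {A : Type*} [CommRing A] (I J : Ideal A) : ℕ :=
  1 + {n : ℕ | 2 ≤ n ∧ I ^ n ⊓ J ≠ I * (I ^ (n - 1) ⊓ J)}.ncard

/-- The weak Artin-Rees number `w(J,A;I)`: the least `s ≥ 1` with
`I^n ∩ J ⊆ I^{n-s}·J` for all `n ≥ s`. -/
noncomputable def weakAR {A : Type*} [CommRing A] (I J : Ideal A) : ℕ :=
  sInf {s : ℕ | 1 ≤ s ∧ ∀ n, s ≤ n → I ^ n ⊓ J ≤ I ^ (n - s) * J}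

/-!
A relation `p̄ ∈ L̄_n` lifts to a form `p` of degree `n` with `p(x) ∈ I^n ∩ J`. Let `K_m` be the
forms of degree `m` whose value at `x` lies in `J`. Since `I^n ∩ J = I·(I^{n-1} ∩ J)`, the value
`p(x)` is also the value `h(x)` of some `h ∈ V_1·K_{n-1}`; then `p - h ∈ L_n = V_1·L_{n-1}`, so
`p ∈ V_1·K_{n-1}`, and reduction modulo `J` maps `V_1·K_{n-1}` into `V̄_1·L̄_{n-1}`.
For noetherian `A`, both `E(I)_n` and the Artin–Rees modules vanish for large `n`, which turns
this into the bounds on `rt` and `st`.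
-/

open MvPolynomial

namespace MvPolynomial

variable {σ R S : Type*} [CommSemiring R] [CommSemiring S]

lemma homogeneousComponent_mul_of_isHomogeneous {f g : MvPolynomial σ R}
    {d n : ℕ} (hg : g.IsHomogeneous d) (hd : d ≤ n) :
    homogeneousComponent n (f * g) = homogeneousComponent (n - d) f * g := by
  let _ := gradedAlgebra (σ := σ) (R := R)
  simpa only [DirectSum.decompose, Equiv.coe_fn_mk, decomposition.decompose'_apply] using
    DirectSum.coe_decompose_mul_of_right_mem_of_le (homogeneousSubmodule σ R) (a := f) hg hd

lemma exists_isHomogeneous_map_eq {f : R →+* S} (hf : Function.Surjective f) {n : ℕ}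
    {p : MvPolynomial σ S} (hp : p.IsHomogeneous n) :
    ∃ q : MvPolynomial σ R, q.IsHomogeneous n ∧ map f q = p := by
  obtain ⟨q, rfl⟩ := map_surjective f hf p
  refine ⟨homogeneousComponent n q, homogeneousComponent_isHomogeneous n q, ?_⟩
  ext d
  rw [coeff_map, coeff_homogeneousComponent, ← homogeneousComponent_eq_self hp,
    coeff_homogeneousComponent, coeff_map]
  split_ifs <;> simp

end MvPolynomial

section ReesRelations

variable {A : Type*} [CommRing A] {r : ℕ}

lemma aeval_C_mul_X_of_isHomogeneous (x : Fin r → A) {n : ℕ} {p : MvPolynomial (Fin r) A}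
    (hp : p.IsHomogeneous n) :
    aeval (fun i => Polynomial.C (x i) * Polynomial.X) p =
      Polynomial.C (eval x p) * Polynomial.X ^ n := by
  induction hp using IsWeightedHomogeneous.induction_on with
  | zero => simp
  | add p q _ _ hp hq => simp [hp, hq, add_mul]
  | monomial d a hd =>
    rw [aeval_monomial, eval_monomial, Finsupp.prod, Finsupp.prod]
    simp_rw [mul_pow, Finset.prod_mul_distrib, ← Polynomial.C_pow, ← map_prod,
      Finset.prod_pow_eq_pow_sum, Polynomial.algebraMap_eq, ← hd, Finsupp.weight_apply]
    simp [Finsupp.sum, mul_assoc]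

lemma mem_reesRel_iff {x : Fin r → A} {n : ℕ} {p : MvPolynomial (Fin r) A} :
    p ∈ reesRel x n ↔ p.IsHomogeneous n ∧ eval x p = 0 := by
  refine and_comm.trans (and_congr_right fun hp => ?_)
  change aeval _ p = 0 ↔ _
  rw [aeval_C_mul_X_of_isHomogeneous x hp, Polynomial.C_mul_X_pow_eq_monomial,
    Polynomial.monomial_eq_zero_iff]

lemma homogeneousSubmodule_mul_reesRel_le (x : Fin r → A) (k m : ℕ) :
    homogeneousSubmodule (Fin r) A k * reesRel x m ≤ reesRel x (k + m) :=
  Submodule.mul_le.mpr fun f hf g hg => by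
    rw [mem_reesRel_iff] at hg ⊢
    exact ⟨IsHomogeneous.mul hf hg.1, by simp [hg.2]⟩

lemma homogeneousComponent_mem_of_mem_span (x : Fin r → A) {n : ℕ}
    {S : Set (MvPolynomial (Fin r) A)} (hS : ∀ g ∈ S, ∃ d < n, g ∈ reesRel x d)
    {p : MvPolynomial (Fin r) A} (hp : p ∈ Ideal.span S) :
    homogeneousComponent n p ∈ homogeneousSubmodule (Fin r) A 1 * reesRel x (n - 1) := by
  obtain ⟨k, f, g, rfl⟩ := Submodule.mem_span_set'.mp hp
  rw [map_sum]
  refine Submodule.sum_mem _ fun i _ => ?_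
  obtain ⟨d, hdn, hg⟩ := hS _ (g i).2
  rw [smul_eq_mul, homogeneousComponent_mul_of_isHomogeneous (mem_reesRel_iff.mp hg).1 hdn.le]
  have hf : homogeneousComponent (n - d) (f i) ∈
      homogeneousSubmodule (Fin r) A 1 * homogeneousSubmodule (Fin r) A (n - 1 - d) := by
    rw [← homogeneousSubmodule_one_pow (σ := Fin r) (R := A) (n - 1 - d), ← pow_succ',
      homogeneousSubmodule_one_pow, show n - 1 - d + 1 = n - d by omega]
    exact homogeneousComponent_mem _ _
  have hle := mul_le_mul_right (homogeneousSubmodule_mul_reesRel_le x (n - 1 - d) d)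
    (homogeneousSubmodule (Fin r) A 1)
  rw [← mul_assoc, Nat.sub_add_cancel (by omega)] at hle
  exact hle (Submodule.mul_mem_mul hf hg)

lemma reesRelStable_iff_le (x : Fin r → A) {n : ℕ} (hn : n ≠ 0) :
    reesRelStable x n ↔
      reesRel x n ≤ homogeneousSubmodule (Fin r) A 1 * reesRel x (n - 1) := by
  refine ⟨le_of_eq, fun h => le_antisymm h ?_⟩
  simpa [Nat.add_sub_cancel' (Nat.one_le_iff_ne_zero.mpr hn)] using
    homogeneousSubmodule_mul_reesRel_le x 1 (n - 1)

lemma eventually_reesRelStable [IsNoetherianRing A] (x : Fin r → A) :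
    ∀ᶠ n in Filter.atTop, reesRelStable x n := by
  -- Once the ideals generated by `L_0, …, L_m` stabilise, `L_n` is generated in lower degrees.
  let F : ℕ →o Ideal (MvPolynomial (Fin r) A) :=
    ⟨fun m => Ideal.span (⋃ d ≤ m, (reesRel x d : Set _)), fun m m' h =>
      Ideal.span_mono (Set.biUnion_subset_biUnion_left fun d hd => le_trans hd h)⟩
  obtain ⟨N, hN⟩ := monotone_stabilizes_iff_noetherian.mpr inferInstance F
  refine Filter.eventually_atTop.mpr ⟨N + 1, fun n hn =>
    (reesRelStable_iff_le x (by omega)).mpr fun p hp => ?_⟩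
  have hpF : p ∈ F N := (hN n (by omega)).symm ▸
    Ideal.subset_span (Set.mem_biUnion (le_refl n) hp)
  rw [← homogeneousComponent_eq_self (mem_reesRel_iff.mp hp).1]
  refine homogeneousComponent_mem_of_mem_span x (fun g hg => ?_) hpF
  obtain ⟨d, hd, hg⟩ := Set.mem_iUnion₂.mp hg
  exact ⟨d, by omega, hg⟩

end ReesRelations

section Quotient

variable {A : Type*} [CommRing A] {r : ℕ} (x : Fin r → A) (J : Ideal A)

/-- `K_m`: the degree-`m` forms lifting the relations `L̄_m` of the images of `x` in `A ⧸ J`. -/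
noncomputable def reesRelModIdeal (m : ℕ) : Submodule A (MvPolynomial (Fin r) A) :=
  homogeneousSubmodule (Fin r) A m ⊓ Submodule.comap (aeval x).toLinearMap J

variable {x J}

lemma reesRel_le_reesRelModIdeal (m : ℕ) : reesRel x m ≤ reesRelModIdeal x J m :=
  fun _ hp => ⟨(mem_reesRel_iff.mp hp).1, by simp [(mem_reesRel_iff.mp hp).2]⟩

lemma map_reesRelModIdeal (m : ℕ) :
    (reesRelModIdeal x J m).map (aeval x).toLinearMap = Ideal.span (Set.range x) ^ m ⊓ J := by
  rw [reesRelModIdeal, ← Submodule.map_inf_eq_map_inf_comap,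
    ← Ideal.span_pow_eq_map_homogeneousSubmodule]

lemma mem_reesRelModIdeal_iff {m : ℕ} {q : MvPolynomial (Fin r) A} :
    q ∈ reesRelModIdeal x J m ↔ q.IsHomogeneous m ∧
      map (Ideal.Quotient.mk J) q ∈ reesRel (fun i => Ideal.Quotient.mk J (x i)) m := by
  rw [mem_reesRel_iff, eval_map]
  refine and_congr_right fun hq => ?_
  change aeval x q ∈ J ↔ _
  rw [and_iff_right (hq.map _), ← Ideal.Quotient.eq_zero_iff_mem]
  exact iff_of_eq (congrArg (· = 0) (eval₂_comp (Ideal.Quotient.mk J) x q))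

lemma map_mk_mem_homogeneousSubmodule_one_mul_reesRel {m : ℕ} {q : MvPolynomial (Fin r) A}
    (hq : q ∈ homogeneousSubmodule (Fin r) A 1 * reesRelModIdeal x J m) :
    map (Ideal.Quotient.mk J) q ∈ homogeneousSubmodule (Fin r) (A ⧸ J) 1 *
      reesRel (fun i => Ideal.Quotient.mk J (x i)) m := by
  refine Submodule.mul_induction_on hq (fun u hu v hv => ?_) (fun u v hu hv => ?_)
  · rw [map_mul]
    exact Submodule.mul_mem_mul (IsHomogeneous.map hu _) (mem_reesRelModIdeal_iff.mp hv).2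
  · rw [map_add]
    exact Submodule.add_mem _ hu hv

lemma reesRelModIdeal_le_mul {n : ℕ} (hn : n ≠ 0) (hst : reesRelStable x n)
    (har : Ideal.span (Set.range x) ^ n ⊓ J =
      Ideal.span (Set.range x) * (Ideal.span (Set.range x) ^ (n - 1) ⊓ J)) :
    reesRelModIdeal x J n ≤
      homogeneousSubmodule (Fin r) A 1 * reesRelModIdeal x J (n - 1) := by
  set M := homogeneousSubmodule (Fin r) A 1 * reesRelModIdeal x J (n - 1)
  intro p hp
  have hM : M ≤ homogeneousSubmodule (Fin r) A n := by
    calc M ≤ homogeneousSubmodule (Fin r) A 1 * homogeneousSubmodule (Fin r) A (n - 1) :=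
          mul_le_mul_right inf_le_left _
      _ ≤ homogeneousSubmodule (Fin r) A (1 + (n - 1)) := homogeneousSubmodule_mul 1 (n - 1)
      _ = homogeneousSubmodule (Fin r) A n := by rw [Nat.add_sub_cancel' (by omega)]
  obtain ⟨h, hh, heq⟩ : aeval x p ∈ M.map (aeval x).toLinearMap := by
    rw [Submodule.map_mul, ← Ideal.span_eq_map_homogeneousSubmodule, map_reesRelModIdeal,
      ← har, ← map_reesRelModIdeal]
    exact Submodule.mem_map_of_mem hp
  have hdiff : p - h ∈ reesRel x n :=
    mem_reesRel_iff.mpr ⟨hp.1.sub (hM hh), by simpa [sub_eq_zero] using heq.symm⟩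
  rw [hst] at hdiff
  have : p - h ∈ M := mul_le_mul_right (reesRel_le_reesRelModIdeal _) _ hdiff
  simpa using M.add_mem this hh

theorem reesRelStable_quotient {n : ℕ} (hn : n ≠ 0) (hst : reesRelStable x n)
    (har : Ideal.span (Set.range x) ^ n ⊓ J =
      Ideal.span (Set.range x) * (Ideal.span (Set.range x) ^ (n - 1) ⊓ J)) :
    reesRelStable (fun i => Ideal.Quotient.mk J (x i)) n := by
  refine (reesRelStable_iff_le _ hn).mpr fun p hp => ?_
  obtain ⟨q, hq, rfl⟩ :=
    exists_isHomogeneous_map_eq Ideal.Quotient.mk_surjective (mem_reesRel_iff.mp hp).1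
  exact map_mk_mem_homogeneousSubmodule_one_mul_reesRel
    (reesRelModIdeal_le_mul hn hst har (mem_reesRelModIdeal_iff.mpr ⟨hq, hp⟩))

end Quotient

section Invariants

open Filter

variable {A B : Type*} [CommRing A] [CommRing B] {r : ℕ}

lemma eventually_pow_inf_eq_mul_pow_inf [IsNoetherianRing A] (I J : Ideal A) :
    ∀ᶠ n in atTop, I ^ n ⊓ J = I * (I ^ (n - 1) ⊓ J) := by
  obtain ⟨k, hk⟩ := Ideal.exists_pow_inf_eq_pow_smul I (J : Submodule A A)
  simp only [Ideal.smul_eq_mul, Ideal.mul_top] at hk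
  refine eventually_atTop.mpr ⟨k + 1, fun n hn => ?_⟩
  change I ^ n ⊓ J = I * (I ^ (n - 1) ⊓ J)
  rw [hk n (by omega), hk (n - 1) (by omega), ← mul_assoc, ← pow_succ',
    show n - 1 - k + 1 = n - k by omega]

lemma relType_spec {x : Fin r → A} (h : ∀ᶠ n in atTop, reesRelStable x n) :
    1 ≤ relType x ∧ ∀ n, relType x + 1 ≤ n → reesRelStable x n := by
  obtain ⟨N, hN⟩ := eventually_atTop.mp h
  have : {s | 1 ≤ s ∧ ∀ n, s + 1 ≤ n → reesRelStable x n}.Nonempty :=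
    ⟨N + 1, by omega, fun n hn => hN n (by omega)⟩
  exact Nat.sInf_mem this

lemma relType_le {x : Fin r → A} {s : ℕ} (hs : 1 ≤ s)
    (h : ∀ n, s + 1 ≤ n → reesRelStable x n) : relType x ≤ s :=
  Nat.sInf_le ⟨hs, h⟩

lemma strongAR_spec {I J : Ideal A} (h : ∀ᶠ n in atTop, I ^ n ⊓ J = I * (I ^ (n - 1) ⊓ J)) :
    1 ≤ strongAR I J ∧ ∀ n, strongAR I J + 1 ≤ n → I ^ n ⊓ J = I * (I ^ (n - 1) ⊓ J) := by
  obtain ⟨N, hN⟩ := eventually_atTop.mp h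
  have : {s | 1 ≤ s ∧ ∀ n, s + 1 ≤ n → I ^ n ⊓ J = I * (I ^ (n - 1) ⊓ J)}.Nonempty :=
    ⟨N + 1, by omega, fun n hn => hN n (by omega)⟩
  exact Nat.sInf_mem this

lemma finite_setOf_not_of_eventually {P : ℕ → Prop} (h : ∀ᶠ n in atTop, P n) :
    {n | ¬ P n}.Finite :=
  eventually_cofinite.mp (Nat.cofinite_eq_atTop ▸ h)

lemma siftedDegrees_finite {x : Fin r → A} (h : ∀ᶠ n in atTop, reesRelStable x n) :
    (siftedDegrees x).Finite :=
  (Set.finite_singleton 1).union ((finite_setOf_not_of_eventually h).subset fun _ hn => hn.2)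

lemma siftedType_le_add {x : Fin r → A} {y : Fin r → B} {P : ℕ → Prop}
    (hxy : ∀ n, 2 ≤ n → reesRelStable x n → P n → reesRelStable y n)
    (hx : ∀ᶠ n in atTop, reesRelStable x n) (hP : ∀ᶠ n in atTop, P n) :
    siftedType y ≤ siftedType x + {n | 2 ≤ n ∧ ¬ P n}.ncard := by
  have hsub : siftedDegrees y ⊆ siftedDegrees x ∪ {n | 2 ≤ n ∧ ¬ P n} := by
    rintro n (h1 | ⟨hn, hy⟩)
    · exact Or.inl (Or.inl h1)
    · by_cases hxn : reesRelStable x n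
      · exact Or.inr ⟨hn, fun hPn => hy (hxy n hn hxn hPn)⟩
      · exact Or.inl (Or.inr ⟨hn, hxn⟩)
  calc siftedType y ≤ (siftedDegrees x ∪ {n | 2 ≤ n ∧ ¬ P n}).ncard :=
        Set.ncard_le_ncard hsub ((siftedDegrees_finite hx).union
          ((finite_setOf_not_of_eventually hP).subset fun _ hn => hn.2))
    _ ≤ siftedType x + {n | 2 ≤ n ∧ ¬ P n}.ncard := Set.ncard_union_le _ _

end Invariants

/-- For every `n ≥ 2`: if `L_n = V_1·L_{n-1}` (i.e. `E(I)_n = 0`) and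
`I^n ∩ J = I·(I^{n-1} ∩ J)` (i.e. `E(J,A;I)_n = 0`), then `L̄_n = V̄_1·L̄_{n-1}`
(i.e. `E(I;A/J)_n = 0`); consequently `rt(I;A/J) ≤ max(rt(I), s(J,A;I))` and
`st(I;A/J) ≤ st(I) + m(J,A;I) − 1`. -/
theorem stmt_6 {A : Type*} [CommRing A] [IsNoetherianRing A] {r : ℕ}
    (x : Fin r → A) (J : Ideal A) :
    (∀ n, 2 ≤ n → reesRelStable x n →
      (Ideal.span (Set.range x)) ^ n ⊓ J =
        Ideal.span (Set.range x) * ((Ideal.span (Set.range x)) ^ (n - 1) ⊓ J) →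
      reesRelStable (fun i => Ideal.Quotient.mk J (x i)) n) ∧
    relType (fun i => Ideal.Quotient.mk J (x i)) ≤
      max (relType x) (strongAR (Ideal.span (Set.range x)) J) ∧
    siftedType (fun i => Ideal.Quotient.mk J (x i)) ≤
      siftedType x + mediumAR (Ideal.span (Set.range x)) J - 1 := by
  set I := Ideal.span (Set.range x)
  have key : ∀ n, 2 ≤ n → reesRelStable x n → I ^ n ⊓ J = I * (I ^ (n - 1) ⊓ J) →
      reesRelStable (fun i => Ideal.Quotient.mk J (x i)) n :=
    fun n hn => reesRelStable_quotient (by omega)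
  have hx := eventually_reesRelStable x
  have hAR := eventually_pow_inf_eq_mul_pow_inf I J
  obtain ⟨hrt1, hrt⟩ := relType_spec hx
  obtain ⟨-, hs⟩ := strongAR_spec hAR
  refine ⟨key, relType_le (le_max_of_le_left hrt1) fun n hn => ?_, ?_⟩
  · exact key n (by omega) (hrt n (by omega)) (hs n (by omega))
  · have := siftedType_le_add key hx hAR
    simp only [mediumAR, ne_eq]
    omega
end

section
/- Suppose I is of linear type, i.e. L_n = V_1·L_{n-1} for all n ≥ 2. Then for every n ≥ 2 one has: L̄_n = V̄_1·L̄_{n-1} if and only if I^n ∩ J = I·(I^{n-1} ∩ J). In other words, E(I;A/J)_n = 0 exactly when the n-th Artin-Rees module E(J,A;I)_n = (I^n ∩ J)/I·(I^{n-1} ∩ J) vanishes; consequently s(J,A;I) = rt(I;A/J) and m(J,A;I) = st(I;A/J). -/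
/-!
Every element of `L̄_n` lifts to a form `f ∈ V_n` with `f(x) ∈ I^n ∩ J`, every element of
`V̄_1·L̄_{n-1}` lifts to `W = V_1·{g ∈ V_{n-1} : g(x) ∈ J}`, and two lifts of the same element
differ by a form with coefficients in `J`. Evaluation at `x` maps these forms `f` onto
`I^n ∩ J`, maps `W` onto `I·(I^{n-1} ∩ J)`, and maps forms with coefficients in `J` into
`J·I^n ⊆ I·(I^{n-1} ∩ J)`. Hence `L̄_n = V̄_1·L̄_{n-1}` forces `I^n ∩ J = I·(I^{n-1} ∩ J)`.
Conversely, if the latter holds, a lift `f` of an element of `L̄_n` agrees at `x` with some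
element of `W`; their difference lies in `L_n = V_1·L_{n-1}`, which reduces into `V̄_1·L̄_{n-1}`.
The equalities of invariants follow degree by degree, the Artin-Rees lemma making the set of
degrees counted by `m(J,A;I)` finite.
-/

open MvPolynomial

lemma MvPolynomial.IsHomogeneous.aeval_mul_left {σ R S : Type*} [CommSemiring R]
    [CommSemiring S] [Algebra R S] {f : MvPolynomial σ R} {n : ℕ} (hf : f.IsHomogeneous n)
    (c : S) (z : σ → S) :
    MvPolynomial.aeval (fun i => c * z i) f = c ^ n * MvPolynomial.aeval z f := by
  rw [f.as_sum, map_sum, map_sum, Finset.mul_sum]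
  refine Finset.sum_congr rfl fun d hd => ?_
  have hdeg : ∑ i ∈ d.support, d i = n := by
    rw [← Finsupp.degree_apply, Finsupp.degree_eq_weight_one]
    exact hf (mem_support_iff.mp hd)
  simp only [aeval_monomial, mul_pow, Finsupp.prod_mul]
  rw [Finsupp.prod, Finset.prod_pow_eq_pow_sum, hdeg]
  ring

lemma MvPolynomial.aeval_map_eq_apply_aeval {σ A B : Type*} [CommRing A] [CommRing B]
    (φ : A →+* B) (x : σ → A) (f : MvPolynomial σ A) :
    aeval (fun i => φ (x i)) (map φ f) = φ (aeval x f) := by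
  rw [aeval_def, aeval_def, eval₂_map, hom_eval₂]
  rfl

lemma MvPolynomial.exists_isHomogeneous_map_eq_s7 {σ A B : Type*} [CommRing A] [CommRing B]
    {φ : A →+* B} (hφ : Function.Surjective φ) {g : MvPolynomial σ B} {n : ℕ}
    (hg : g.IsHomogeneous n) : ∃ f : MvPolynomial σ A, f.IsHomogeneous n ∧ map φ f = g := by
  obtain ⟨f, rfl⟩ := map_surjective φ hφ g
  refine ⟨homogeneousComponent n f, homogeneousComponent_isHomogeneous n f, ?_⟩
  conv_rhs => rw [← homogeneousComponent_eq_self hg]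
  ext d
  simp only [coeff_map, coeff_homogeneousComponent]
  split_ifs <;> simp

section ReesRelations

variable {B : Type*} [CommRing B] {r : ℕ}

lemma mem_reesRel_iff_s7 {y : Fin r → B} {n : ℕ} {f : MvPolynomial (Fin r) B} :
    f ∈ reesRel y n ↔ f.IsHomogeneous n ∧ aeval y f = 0 := by
  rw [reesRel, Submodule.mem_inf, Submodule.restrictScalars_mem, RingHom.mem_ker,
    mem_homogeneousSubmodule, and_comm]
  refine and_congr_right fun hf => ?_
  have hφ : aeval (fun i => Polynomial.C (y i) * Polynomial.X) f =
      Polynomial.C (aeval y f) * Polynomial.X ^ n := by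
    simp_rw [mul_comm (Polynomial.C _) Polynomial.X]
    rw [hf.aeval_mul_left, mul_comm]
    exact congrArg (· * _) (aeval_algebraMap_apply (Polynomial B) y f)
  rw [hφ, Polynomial.C_mul_X_pow_eq_monomial, Polynomial.monomial_eq_zero_iff]

lemma mul_reesRel_le (y : Fin r → B) (m : ℕ) :
    homogeneousSubmodule (Fin r) B 1 * reesRel y m ≤ reesRel y (m + 1) := by
  refine Submodule.mul_le.mpr fun p hp q hq => ?_
  rw [mem_reesRel_iff_s7] at hq ⊢
  exact ⟨add_comm 1 m ▸ hp.mul hq.1, by rw [map_mul, hq.2, mul_zero]⟩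

lemma aeval_mem_span_pow {y : Fin r → B} {n : ℕ} {f : MvPolynomial (Fin r) B}
    (hf : f.IsHomogeneous n) : aeval y f ∈ Ideal.span (Set.range y) ^ n := by
  rw [Ideal.span_pow_eq_map_homogeneousSubmodule]
  exact Submodule.mem_map_of_mem hf

lemma aeval_mem_mul_span_pow {y : Fin r → B} {n : ℕ} {f : MvPolynomial (Fin r) B}
    (hf : f.IsHomogeneous n) {K : Ideal B} (hK : ∀ d, coeff d f ∈ K) :
    aeval y f ∈ K * Ideal.span (Set.range y) ^ n := by
  rw [f.as_sum, map_sum]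
  refine Submodule.sum_mem _ fun d hd => ?_
  have hdeg : d.degree = n := by
    rw [Finsupp.degree_eq_weight_one]; exact hf (mem_support_iff.mp hd)
  rw [← mul_one (coeff d f), ← C_mul_monomial, map_mul, aeval_C, Algebra.algebraMap_self,
    RingHom.id_apply]
  exact Ideal.mul_mem_mul (hK d) (aeval_mem_span_pow (isHomogeneous_monomial 1 hdeg))

end ReesRelations

section Reduction

variable {A B : Type*} [CommRing A] [CommRing B] {r : ℕ}

lemma map_mem_reesRel_iff (φ : A →+* B) {x : Fin r → A} {n : ℕ} {f : MvPolynomial (Fin r) A}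
    (hf : f.IsHomogeneous n) :
    map φ f ∈ reesRel (fun i => φ (x i)) n ↔ aeval x f ∈ RingHom.ker φ := by
  rw [mem_reesRel_iff_s7, aeval_map_eq_apply_aeval, RingHom.mem_ker]
  exact and_iff_right (hf.map φ)

lemma map_mem_mul_reesRel (φ : A →+* B) {x : Fin r → A} {m : ℕ} {u : MvPolynomial (Fin r) A}
    (hu : u ∈ homogeneousSubmodule (Fin r) A 1 * reesRel x m) :
    map φ u ∈ homogeneousSubmodule (Fin r) B 1 * reesRel (fun i => φ (x i)) m := by
  refine Submodule.mul_induction_on hu (fun p hp q hq => ?_) fun u v hu hv => ?_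
  · rw [mem_reesRel_iff_s7] at hq
    rw [map_mul]
    refine Submodule.mul_mem_mul (hp.map φ) ((map_mem_reesRel_iff φ hq.1).mpr ?_)
    rw [hq.2]
    exact zero_mem _
  · rw [map_add]
    exact add_mem hu hv

end Reduction

lemma Ideal.mul_pow_succ_le_mul_inf {A : Type*} [CommRing A] (I J : Ideal A) (m : ℕ) :
    J * I ^ (m + 1) ≤ I * (I ^ m ⊓ J) := by
  rw [pow_succ', mul_left_comm]
  exact Ideal.mul_mono_right (le_inf Ideal.mul_le_right Ideal.mul_le_left)

lemma Ideal.mul_pow_inf_le_pow_succ_inf {A : Type*} [CommRing A] (I J : Ideal A) (m : ℕ) :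
    I * (I ^ m ⊓ J) ≤ I ^ (m + 1) ⊓ J :=
  le_inf (pow_succ' I m ▸ Ideal.mul_mono_right inf_le_left)
    (Ideal.mul_le_right.trans inf_le_right)

section Quotient

variable {A : Type*} [CommRing A] {r : ℕ} (x : Fin r → A) (J : Ideal A) (m : ℕ)

noncomputable def liftedRel : Submodule A (MvPolynomial (Fin r) A) :=
  homogeneousSubmodule (Fin r) A 1 *
    (homogeneousSubmodule (Fin r) A m ⊓ Submodule.comap (aeval x).toLinearMap J)

lemma liftedRel_le : liftedRel x J m ≤ homogeneousSubmodule (Fin r) A (m + 1) := by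
  rw [add_comm, liftedRel]
  grw [inf_le_left]
  exact homogeneousSubmodule_mul 1 m

lemma map_aeval_liftedRel :
    (liftedRel x J m).map (aeval x).toLinearMap =
      Ideal.span (Set.range x) * (Ideal.span (Set.range x) ^ m ⊓ J) := by
  rw [liftedRel, Submodule.map_mul, ← Ideal.span_eq_map_homogeneousSubmodule,
    Ideal.span_pow_eq_map_homogeneousSubmodule]
  congr 1
  refine le_antisymm (Submodule.map_inf_le _ |>.trans (inf_le_inf_left _ ?_)) ?_
  · exact Submodule.map_comap_le _ _
  · rintro _ ⟨⟨f, hf, rfl⟩, hJ⟩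
    exact Submodule.mem_map_of_mem ⟨hf, hJ⟩

lemma map_mem_mul_reesRel_of_mem_liftedRel {h : MvPolynomial (Fin r) A}
    (hh : h ∈ liftedRel x J m) :
    map (Ideal.Quotient.mk J) h ∈ homogeneousSubmodule (Fin r) (A ⧸ J) 1 *
      reesRel (fun i => Ideal.Quotient.mk J (x i)) m := by
  refine Submodule.mul_induction_on hh (fun p hp q hq => ?_) fun u v hu hv => ?_
  · rw [map_mul]
    refine Submodule.mul_mem_mul (hp.map _) ((map_mem_reesRel_iff _ hq.1).mpr ?_)
    rw [Ideal.mk_ker]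
    exact hq.2
  · rw [map_add]
    exact add_mem hu hv

lemma exists_mem_liftedRel_map_eq {g : MvPolynomial (Fin r) (A ⧸ J)}
    (hg : g ∈ homogeneousSubmodule (Fin r) (A ⧸ J) 1 *
      reesRel (fun i => Ideal.Quotient.mk J (x i)) m) :
    ∃ h ∈ liftedRel x J m, map (Ideal.Quotient.mk J) h = g := by
  refine Submodule.mul_induction_on hg (fun p hp q hq => ?_) ?_
  · obtain ⟨p', hp', rfl⟩ := exists_isHomogeneous_map_eq_s7 Ideal.Quotient.mk_surjective hp
    obtain ⟨q', hq', rfl⟩ :=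
      exists_isHomogeneous_map_eq_s7 Ideal.Quotient.mk_surjective (mem_reesRel_iff_s7.mp hq).1
    have hq'J : aeval x q' ∈ J := by rwa [map_mem_reesRel_iff _ hq', Ideal.mk_ker] at hq
    exact ⟨p' * q', Submodule.mul_mem_mul hp' ⟨hq', hq'J⟩, map_mul _ _ _⟩
  · rintro _ _ ⟨h₁, hh₁, rfl⟩ ⟨h₂, hh₂, rfl⟩
    exact ⟨h₁ + h₂, add_mem hh₁ hh₂, map_add _ _ _⟩

lemma span_pow_inf_eq_of_reesRelStable
    (h : reesRelStable (fun i => Ideal.Quotient.mk J (x i)) (m + 1)) :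
    Ideal.span (Set.range x) ^ (m + 1) ⊓ J =
      Ideal.span (Set.range x) * (Ideal.span (Set.range x) ^ m ⊓ J) := by
  set I := Ideal.span (Set.range x)
  refine le_antisymm (fun a ⟨haI, haJ⟩ => ?_) (I.mul_pow_inf_le_pow_succ_inf J m)
  rw [Ideal.span_pow_eq_map_homogeneousSubmodule] at haI
  obtain ⟨f, hf, rfl⟩ := haI
  rw [AlgHom.toLinearMap_apply] at haJ ⊢
  have hf' :
      map (Ideal.Quotient.mk J) f ∈ reesRel (fun i => Ideal.Quotient.mk J (x i)) (m + 1) :=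
    (map_mem_reesRel_iff _ hf).mpr (by rwa [Ideal.mk_ker])
  rw [h] at hf'
  obtain ⟨g, hg, hgf⟩ := exists_mem_liftedRel_map_eq x J m hf'
  have hfg : aeval x (f - g) ∈ J * I ^ (m + 1) := by
    refine aeval_mem_mul_span_pow (sub_mem hf (liftedRel_le x J m hg)) fun d => ?_
    rw [← Ideal.Quotient.eq_zero_iff_mem, ← coeff_map, map_sub, hgf, sub_self, coeff_zero]
  have hg' : aeval x g ∈ I * (I ^ m ⊓ J) := by
    rw [← map_aeval_liftedRel]
    exact Submodule.mem_map_of_mem hg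
  rw [← sub_add_cancel (aeval x f) (aeval x g), ← map_sub]
  exact add_mem (I.mul_pow_succ_le_mul_inf J m hfg) hg'

lemma reesRelStable_of_span_pow_inf_eq (hlin : reesRelStable x (m + 1))
    (h : Ideal.span (Set.range x) ^ (m + 1) ⊓ J =
      Ideal.span (Set.range x) * (Ideal.span (Set.range x) ^ m ⊓ J)) :
    reesRelStable (fun i => Ideal.Quotient.mk J (x i)) (m + 1) := by
  refine le_antisymm (fun g hg => ?_) (mul_reesRel_le _ m)
  obtain ⟨f, hf, rfl⟩ :=
    exists_isHomogeneous_map_eq_s7 Ideal.Quotient.mk_surjective (mem_reesRel_iff_s7.mp hg).1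
  have hfJ : aeval x f ∈ Ideal.span (Set.range x) ^ (m + 1) ⊓ J := by
    rw [map_mem_reesRel_iff _ hf, Ideal.mk_ker] at hg
    exact ⟨aeval_mem_span_pow hf, hg⟩
  rw [h, ← map_aeval_liftedRel] at hfJ
  obtain ⟨k, hk, hkf⟩ := hfJ
  rw [AlgHom.toLinearMap_apply] at hkf
  have hker : f - k ∈ reesRel x (m + 1) :=
    mem_reesRel_iff_s7.mpr ⟨sub_mem hf (liftedRel_le x J m hk), by rw [map_sub, hkf, sub_self]⟩
  rw [hlin] at hker
  rw [← sub_add_cancel f k, map_add]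
  exact add_mem (map_mem_mul_reesRel _ hker) (map_mem_mul_reesRel_of_mem_liftedRel x J m hk)

lemma reesRelStable_quotient_iff {n : ℕ} (hn : n ≠ 0) (hlin : reesRelStable x n) :
    reesRelStable (fun i => Ideal.Quotient.mk J (x i)) n ↔
      Ideal.span (Set.range x) ^ n ⊓ J =
        Ideal.span (Set.range x) * (Ideal.span (Set.range x) ^ (n - 1) ⊓ J) := by
  obtain ⟨m, rfl⟩ := Nat.exists_eq_succ_of_ne_zero hn
  exact ⟨span_pow_inf_eq_of_reesRelStable x J m, reesRelStable_of_span_pow_inf_eq x J m hlin⟩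

end Quotient

section ArtinReesNumbers

variable {A B : Type*} [CommRing A] [CommRing B] {r : ℕ} (y : Fin r → B) (I J : Ideal A)

lemma strongAR_eq_relType_of_iff
    (h : ∀ n, 2 ≤ n → (reesRelStable y n ↔ I ^ n ⊓ J = I * (I ^ (n - 1) ⊓ J))) :
    strongAR I J = relType y := by
  unfold strongAR relType
  congr 1
  ext s
  exact and_congr_right fun hs => forall₂_congr fun n hn => (h n (by omega)).symm

lemma Ideal.finite_setOf_pow_inf_ne [IsNoetherianRing A] :
    {n | I ^ n ⊓ J ≠ I * (I ^ (n - 1) ⊓ J)}.Finite := by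
  obtain ⟨k, hk⟩ := I.exists_pow_inf_eq_pow_smul J
  simp only [smul_eq_mul, Ideal.mul_top] at hk
  refine (Set.finite_Iic k).subset fun n hn => ?_
  rw [Set.mem_Iic]
  by_contra! hkn
  refine hn ?_
  rw [hk n hkn.le, hk (n - 1) (by omega), ← mul_assoc, ← pow_succ', Nat.sub_right_comm,
    Nat.sub_add_cancel (by omega)]

lemma mediumAR_eq_siftedType_of_iff [IsNoetherianRing A]
    (h : ∀ n, 2 ≤ n → (reesRelStable y n ↔ I ^ n ⊓ J = I * (I ^ (n - 1) ⊓ J))) :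
    mediumAR I J = siftedType y := by
  have hdeg : {n | 2 ≤ n ∧ ¬reesRelStable y n} =
      {n | 2 ≤ n ∧ I ^ n ⊓ J ≠ I * (I ^ (n - 1) ⊓ J)} :=
    Set.ext fun n => and_congr_right fun hn => not_congr (h n hn)
  have hfin : {n | 2 ≤ n ∧ I ^ n ⊓ J ≠ I * (I ^ (n - 1) ⊓ J)}.Finite :=
    (I.finite_setOf_pow_inf_ne J).subset fun _ hn => hn.2
  rw [mediumAR, siftedType, siftedDegrees, hdeg,
    Set.ncard_union_eq (by simp) (Set.finite_singleton 1) hfin, Set.ncard_singleton]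

end ArtinReesNumbers

/-- If `I` is of linear type (`L_n = V_1·L_{n-1}` for all `n ≥ 2`), then for
each `n ≥ 2`: `L̄_n = V̄_1·L̄_{n-1}` iff `I^n ∩ J = I·(I^{n-1} ∩ J)`; consequently
`s(J,A;I) = rt(I;A/J)` and `m(J,A;I) = st(I;A/J)`. -/
theorem stmt_7 {A : Type*} [CommRing A] [IsNoetherianRing A] {r : ℕ}
    (x : Fin r → A) (J : Ideal A) (hlin : ∀ n, 2 ≤ n → reesRelStable x n) :
    (∀ n, 2 ≤ n → (reesRelStable (fun i => Ideal.Quotient.mk J (x i)) n ↔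
      (Ideal.span (Set.range x)) ^ n ⊓ J =
        Ideal.span (Set.range x) * ((Ideal.span (Set.range x)) ^ (n - 1) ⊓ J))) ∧
    strongAR (Ideal.span (Set.range x)) J =
      relType (fun i => Ideal.Quotient.mk J (x i)) ∧
    mediumAR (Ideal.span (Set.range x)) J =
      siftedType (fun i => Ideal.Quotient.mk J (x i)) := by
  have h n (hn : 2 ≤ n) := reesRelStable_quotient_iff x J (by omega) (hlin n hn)
  exact ⟨h, strongAR_eq_relType_of_iff _ _ _ h, mediumAR_eq_siftedType_of_iff _ _ _ h⟩
end
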